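/- Let n be the number of validators and let V₁ and V₂ be any two views. Suppose the checkpoint C_f = (χ_f, c_f) is justified in V₁ and there is a supermajority link C_f → T in V₁ with T.c = c_f + 1 (i.e., C_f is finalized in V₁ via this link), and suppose the checkpoint C' = (χ', c_f + 1) is justified in V₂ with ¬(χ_f ≼ χ'). Then there exists a set W of validators with 3·|W| ≥ n such that every validator in W violates condition E₁ in the combined message set V₁ ∪ V₂. -/
import Mathlib


/-- A checkpoint: a chain (a list of blocks) together with a slot. -/
structure Checkpoint (β : Type) where
  chain : List β
  c : ℕ
deriving DecidableEq

/-- A fin-vote: a validator together with a source and a target checkpoint. -/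
abbrev FinVote (β : Type) (n : ℕ) := Fin n × Checkpoint β × Checkpoint β

/-- A fin-vote from `S` to `T` is valid if `S.chain` is a prefix of `T.chain`
and `S.c < T.c`. -/
def ValidVote {β : Type} (S T : Checkpoint β) : Prop :=
  S.chain <+: T.chain ∧ S.c < T.c

/-- There is a supermajority link `S → T` in view `V`: the vote is valid and at least
`2n/3` validators (formally: `3·card ≥ 2n`) cast the fin-vote `(·, S, T)` in `V`. -/
def SMLink {β : Type} [DecidableEq β] {n : ℕ} (V : Finset (FinVote β n))
    (S T : Checkpoint β) : Prop :=
  ValidVote S T ∧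
    2 * n ≤ 3 * (Finset.univ.filter (fun v : Fin n => (v, S, T) ∈ V)).card

/-- A checkpoint is justified in view `V` (with genesis block `g`) if it is the genesis
checkpoint `(⟨[g], 0⟩)` or is reachable from it by a chain of supermajority links. -/
inductive Justified {β : Type} [DecidableEq β] (g : β) {n : ℕ}
    (V : Finset (FinVote β n)) : Checkpoint β → Prop
  | genesis : Justified g V ⟨[g], 0⟩
  | step (S C : Checkpoint β) : Justified g V S → SMLink V S C → Justified g V C

/-- A checkpoint `C` is finalized in view `V`: it is the genesis checkpoint, or it is
justified and there is a supermajority link `C → T` with `T.c = C.c + 1`. -/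
def FinalizedCp {β : Type} [DecidableEq β] (g : β) {n : ℕ}
    (V : Finset (FinVote β n)) (C : Checkpoint β) : Prop :=
  C = ⟨[g], 0⟩ ∨ (Justified g V C ∧ ∃ T : Checkpoint β, T.c = C.c + 1 ∧ SMLink V C T)

/-- A chain is finalized in view `V` if it is a prefix of the chain of some finalized
checkpoint. -/
def FinalizedChain {β : Type} [DecidableEq β] (g : β) {n : ℕ}
    (V : Finset (FinVote β n)) (χ : List β) : Prop :=
  ∃ C : Checkpoint β, FinalizedCp g V C ∧ χ <+: C.chain

/-- Validator `v` violates condition `E₁` (double voting) in the message set `M`: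
`M` contains two distinct fin-votes by `v` whose targets have the same slot. -/
def ViolatesE1 {β : Type} {n : ℕ} (M : Finset (FinVote β n)) (v : Fin n) : Prop :=
  ∃ S₁ T₁ S₂ T₂ : Checkpoint β, (v, S₁, T₁) ∈ M ∧ (v, S₂, T₂) ∈ M ∧
    (S₁, T₁) ≠ (S₂, T₂) ∧ T₁.c = T₂.c

/-- Validator `v` violates condition `E₂` (surround voting) in the message set `M`:
`M` contains fin-votes `(v, C₁, C₂)` and `(v, C₃, C₄)` with `C₃.c < C₁.c < C₂.c < C₄.c`. -/
def ViolatesE2 {β : Type} {n : ℕ} (M : Finset (FinVote β n)) (v : Fin n) : Prop :=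
  ∃ C₁ C₂ C₃ C₄ : Checkpoint β, (v, C₁, C₂) ∈ M ∧ (v, C₃, C₄) ∈ M ∧
    C₃.c < C₁.c ∧ C₁.c < C₂.c ∧ C₂.c < C₄.c

/-- **Case 1 of the proof of Lemma 6.** Suppose `Cf` is justified in `V₁` and there is a
supermajority link `Cf → T` in `V₁` with `T.c = Cf.c + 1` (so `Cf` is finalized via this
link), and suppose the checkpoint `(χ', Cf.c + 1)` is justified in `V₂` with
`¬(Cf.chain ≼ χ')`. Then at least `n/3` validators violated `E₁` in `V₁ ∪ V₂`. -/
theorem justified_next_slot_extends_finalized {β : Type} [DecidableEq β] (g : β) (n : ℕ)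
    (V₁ V₂ : Finset (FinVote β n)) (Cf T : Checkpoint β) (χ' : List β)
    (hjf : Justified g V₁ Cf) (hT : T.c = Cf.c + 1) (hlink : SMLink V₁ Cf T)
    (hj' : Justified g V₂ ⟨χ', Cf.c + 1⟩) (hnp : ¬ Cf.chain <+: χ') :
    ∃ W : Finset (Fin n), n ≤ 3 * W.card ∧ ∀ v ∈ W, ViolatesE1 (V₁ ∪ V₂) v := by
  obtain ⟨hv1, hc1⟩ := hlink
  cases hj' with
  | step S C' hjS hlink' =>
    obtain ⟨hv2, hc2⟩ := hlink'
    set A := Finset.univ.filter (fun v : Fin n => (v, Cf, T) ∈ V₁) with hA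
    set B := Finset.univ.filter (fun v : Fin n => (v, S, (⟨χ', Cf.c + 1⟩ : Checkpoint β)) ∈ V₂) with hB
    refine ⟨A ∩ B, ?_, ?_⟩
    · have h1 : (A ∪ B).card ≤ n := by
        simpa using Finset.card_le_card (Finset.subset_univ (A ∪ B))
      have h2 := Finset.card_inter_add_card_union A B
      omega
    · intro v hv
      rw [Finset.mem_inter, hA, hB, Finset.mem_filter, Finset.mem_filter] at hv
      refine ⟨Cf, T, S, ⟨χ', Cf.c + 1⟩, Finset.mem_union_left _ hv.1.2,
        Finset.mem_union_right _ hv.2.2, ?_, by simpa using hT⟩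
      intro h
      apply hnp
      have hT' : T = (⟨χ', Cf.c + 1⟩ : Checkpoint β) := congrArg Prod.snd h
      have := hv1.1
      rw [hT'] at this
      exact this
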